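/- (Proposition 1: order-invariance of the spectral–phasic decomposition.) The spectral component of the difference between two datasets is the same whether spectral effects are assessed after phasic effects or before them: for all features f and datasets x, y, the spectral component of the decomposition 𝓜^i → 𝓜^{A'} → 𝓜^{φ'}, namely Δ^{A'}(x, y) := (ν^i(x) − Eν^{A'}(x|y)) − (ν^i(y) − Eν^{A'}(y|x)), equals the spectral component of the decomposition 𝓜^i → 𝓜^{φ} → 𝓜^{A}, namely Δ^{A}(x, y) := Eν^{φ}(x|y) − Eν^{φ}(y|x). -/

import Mathlib

open ZMod Complex

/-- The Fourier amplitude–phase surrogate: the signal whose Fourier coefficients have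
the amplitudes of `𝓕 a` and the phases of `𝓕 p`. -/
noncomputable def surrogate {T : ℕ} [NeZero T] (a p : ZMod T → ℂ) : ZMod T → ℂ :=
  ZMod.dft.symm
    (fun k => ((‖ZMod.dft a k‖ : ℝ) : ℂ) * Complex.exp ((ZMod.dft p k).arg * Complex.I))

/-!
Keeping both amplitude and phase of a signal returns the signal, so the diagonal terms
`F(a, a)` of both null models collapse to `f a`. What remains is bookkeeping: the cross terms
`F(y k, x j)` and `F(x j, y k)` enter both sides with the same weight `1 / (2NM)`, once the
double sums are swapped.
-/

theorem surrogate_self {T : ℕ} [NeZero T] (a : ZMod T → ℂ) : surrogate a a = a := by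
  have hpolar : (fun k => ((‖ZMod.dft a k‖ : ℝ) : ℂ) *
      Complex.exp ((ZMod.dft a k).arg * Complex.I)) = ZMod.dft a :=
    funext fun k => Complex.norm_mul_exp_arg_mul_I _
  rw [surrogate, hpolar, ZMod.dft.symm_apply_apply]

theorem half_mixture_gap_swap {α ι κ : Type*} [Fintype ι] [Fintype κ]
    (g : α → ℝ) (F : α → α → ℝ) (x : ι → α) (y : κ → α) (n m : ℝ) :
    ((1 / n) * ∑ j, g (x j) -
        (1 / n) * ∑ j, ((1 / 2 : ℝ) * g (x j) + (1 / (2 * m)) * ∑ k, F (y k) (x j)))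
      - ((1 / m) * ∑ k, g (y k) -
          (1 / m) * ∑ k, ((1 / 2 : ℝ) * g (y k) + (1 / (2 * n)) * ∑ j, F (x j) (y k)))
    = (1 / n) * ∑ j, ((1 / 2 : ℝ) * g (x j) + (1 / (2 * m)) * ∑ k, F (x j) (y k))
      - (1 / m) * ∑ k, ((1 / 2 : ℝ) * g (y k) + (1 / (2 * n)) * ∑ j, F (y k) (x j)) := by
  simp only [Finset.sum_add_distrib, ← Finset.mul_sum,
    Finset.sum_comm (f := fun j k => F (x j) (y k)),
    Finset.sum_comm (f := fun j k => F (y k) (x j))]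
  ring

theorem decomposition_order_invariance_general {T N M : ℕ} [NeZero T]
    (f : (ZMod T → ℂ) → ℝ) (x : Fin N → ZMod T → ℂ) (y : Fin M → ZMod T → ℂ) :
    ((1 / (N : ℝ)) * ∑ j, f (x j) -
        (1 / (N : ℝ)) * ∑ j, ((1 / 2 : ℝ) * f (surrogate (x j) (x j)) +
          (1 / (2 * (M : ℝ))) * ∑ k, f (surrogate (y k) (x j))))
      - ((1 / (M : ℝ)) * ∑ k, f (y k) -
          (1 / (M : ℝ)) * ∑ k, ((1 / 2 : ℝ) * f (surrogate (y k) (y k)) +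
            (1 / (2 * (N : ℝ))) * ∑ j, f (surrogate (x j) (y k))))
    = (1 / (N : ℝ)) * ∑ j, ((1 / 2 : ℝ) * f (surrogate (x j) (x j)) +
          (1 / (2 * (M : ℝ))) * ∑ k, f (surrogate (x j) (y k)))
      - (1 / (M : ℝ)) * ∑ k, ((1 / 2 : ℝ) * f (surrogate (y k) (y k)) +
          (1 / (2 * (N : ℝ))) * ∑ j, f (surrogate (y k) (x j))) := by
  simp only [surrogate_self]
  exact half_mixture_gap_swap f (fun a p => f (surrogate a p)) x y N M

/-- Proposition 1 (order-invariance of the spectral–phasic decomposition):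
`Δ^{A'}(x, y) = (ν^i(x) − Eν^{A'}(x|y)) − (ν^i(y) − Eν^{A'}(y|x))` equals
`Δ^{A}(x, y) = Eν^{φ}(x|y) − Eν^{φ}(y|x)`. -/
theorem decomposition_order_invariance {T N M : ℕ} [NeZero T] (hN : 0 < N) (hM : 0 < M)
    (f : (ZMod T → ℂ) → ℝ) (x : Fin N → ZMod T → ℂ) (y : Fin M → ZMod T → ℂ) :
    ((1 / (N : ℝ)) * ∑ j, f (x j) -
        (1 / (N : ℝ)) * ∑ j, ((1 / 2 : ℝ) * f (surrogate (x j) (x j)) +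
          (1 / (2 * (M : ℝ))) * ∑ k, f (surrogate (y k) (x j))))
      - ((1 / (M : ℝ)) * ∑ k, f (y k) -
          (1 / (M : ℝ)) * ∑ k, ((1 / 2 : ℝ) * f (surrogate (y k) (y k)) +
            (1 / (2 * (N : ℝ))) * ∑ j, f (surrogate (x j) (y k))))
    = (1 / (N : ℝ)) * ∑ j, ((1 / 2 : ℝ) * f (surrogate (x j) (x j)) +
          (1 / (2 * (M : ℝ))) * ∑ k, f (surrogate (x j) (y k)))
      - (1 / (M : ℝ)) * ∑ k, ((1 / 2 : ℝ) * f (surrogate (y k) (y k)) +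
          (1 / (2 * (N : ℝ))) * ∑ j, f (surrogate (y k) (x j))) :=
  decomposition_order_invariance_general f x y
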